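/- Let R be a reduced ring and S a multiplicatively closed set of central non-zero-divisors, with localization RS⁻¹ (also reduced, containing R). If for all a, b ∈ R and s ∈ S the rr-infimum of as and bs exists in R and equals (a ∧_rr b)s, and r = a ∧_rr b in R, then r = a ∧_rr b in RS⁻¹. -/

import Mathlib

/-!
Write `t ∈ RS⁻¹` as `x / s`. Multiplying by the unit `s` and using that `R → RS⁻¹` is injective
(`S` consists of non-zero-divisors), `t ≤_rr a` holds in `RS⁻¹` exactly when `x ≤_rr a s` holds
in `R`. So a common rr-lower bound `t` of `a` and `b` in `RS⁻¹` gives a common rr-lower bound `x`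
of `a s` and `b s` in `R`; as `r s = (a s) ∧_rr (b s)`, this yields `x ≤_rr r s`, i.e. `t ≤_rr r`.
-/

def RRLe {R : Type*} [Mul R] (a b : R) : Prop := a * a = a * b

def IsRRInf {R : Type*} [Mul R] (c a b : R) : Prop :=
  RRLe c a ∧ RRLe c b ∧ ∀ d, RRLe d a → RRLe d b → RRLe d c

theorem rrLe_map_iff {R S F : Type*} [Mul R] [Mul S] [FunLike F R S] [MulHomClass F R S]
    {f : F} (hf : Function.Injective f) {a b : R} : RRLe (f a) (f b) ↔ RRLe a b := by
  simp only [RRLe, ← map_mul, hf.eq_iff]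

theorem rrLe_mul_left_iff {M : Type*} [CommMonoid M] {u : M} (hu : IsUnit u) {a b : M} :
    RRLe (u * a) (u * b) ↔ RRLe a b := by
  rw [RRLe, RRLe, mul_mul_mul_comm, mul_mul_mul_comm u a u b, (hu.mul hu).mul_right_inj]

section Localization

variable {R T : Type*} [CommRing R] [CommRing T] [Algebra R T] {M : Submonoid R}
  [IsLocalization M T]

theorem rrLe_mk'_algebraMap_iff (hM : M ≤ nonZeroDivisors R) (x c : R) (s : M) :
    RRLe (IsLocalization.mk' T x s) (algebraMap R T c) ↔ RRLe x (c * s) := by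
  rw [← rrLe_mul_left_iff (IsLocalization.map_units T s), IsLocalization.mk'_spec', mul_comm,
    ← map_mul, rrLe_map_iff (IsLocalization.injective T hM)]

theorem IsRRInf.algebraMap_of_isLocalization (hM : M ≤ nonZeroDivisors R) {a b r : R}
    (hr : IsRRInf r a b)
    (hscale : ∀ s ∈ M, ∀ d, RRLe d (a * s) → RRLe d (b * s) → RRLe d (r * s)) :
    IsRRInf (algebraMap R T r) (algebraMap R T a) (algebraMap R T b) := by
  have hinj := IsLocalization.injective T hM
  refine ⟨(rrLe_map_iff hinj).2 hr.1, (rrLe_map_iff hinj).2 hr.2.1, fun t => ?_⟩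
  obtain ⟨x, s, rfl⟩ := IsLocalization.exists_mk'_eq M t
  simp only [rrLe_mk'_algebraMap_iff hM]
  exact hscale s s.2 x

end Localization

theorem stmt_15_general {R T : Type*} [CommRing R] [CommRing T]
    (M : Submonoid R) (hnzd : ∀ s ∈ M, ∀ x : R, s * x = 0 → x = 0)
    [Algebra R T] [IsLocalization M T]
    (hdist : ∀ a b c : R,
      (c * c = c * a ∧ c * c = c * b ∧
        ∀ d : R, d * d = d * a → d * d = d * b → d * d = d * c) →
      ∀ s ∈ M,
        ((c * s) * (c * s) = (c * s) * (a * s) ∧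
          (c * s) * (c * s) = (c * s) * (b * s) ∧
          ∀ d : R, d * d = d * (a * s) → d * d = d * (b * s) →
            d * d = d * (c * s)))
    (a b r : R)
    (hr : r * r = r * a ∧ r * r = r * b ∧
      ∀ d : R, d * d = d * a → d * d = d * b → d * d = d * r) :
    algebraMap R T r * algebraMap R T r = algebraMap R T r * algebraMap R T a ∧
    algebraMap R T r * algebraMap R T r = algebraMap R T r * algebraMap R T b ∧
    ∀ t : T, t * t = t * algebraMap R T a → t * t = t * algebraMap R T b →
      t * t = t * algebraMap R T r := by
  have hM : M ≤ nonZeroDivisors R := fun s hs => mem_nonZeroDivisors_iff_left.2 (hnzd s hs)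
  exact IsRRInf.algebraMap_of_isLocalization hM hr fun s hs => (hdist a b r hr s hs).2.2

/-- If multiplication by elements of `M` distributes over rr-infima in `R`,
then rr-infima in `R` remain rr-infima in the localization `RS⁻¹`. -/
theorem stmt_15 {R T : Type*} [CommRing R] [IsReduced R] [CommRing T] [IsReduced T]
    (M : Submonoid R) (hnzd : ∀ s ∈ M, ∀ x : R, s * x = 0 → x = 0)
    [Algebra R T] [IsLocalization M T]
    (hdist : ∀ a b c : R,
      (c * c = c * a ∧ c * c = c * b ∧
        ∀ d : R, d * d = d * a → d * d = d * b → d * d = d * c) →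
      ∀ s ∈ M,
        ((c * s) * (c * s) = (c * s) * (a * s) ∧
          (c * s) * (c * s) = (c * s) * (b * s) ∧
          ∀ d : R, d * d = d * (a * s) → d * d = d * (b * s) →
            d * d = d * (c * s)))
    (a b r : R)
    (hr : r * r = r * a ∧ r * r = r * b ∧
      ∀ d : R, d * d = d * a → d * d = d * b → d * d = d * r) :
    algebraMap R T r * algebraMap R T r = algebraMap R T r * algebraMap R T a ∧
    algebraMap R T r * algebraMap R T r = algebraMap R T r * algebraMap R T b ∧
    ∀ t : T, t * t = t * algebraMap R T a → t * t = t * algebraMap R T b →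
      t * t = t * algebraMap R T r :=
  stmt_15_general M hnzd hdist a b r hr
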